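/- arXiv:2506.16767 — 4 statements merged into one kernel-verified Lean document; each statement's English description precedes it below -/
import Mathlib

section
/- Let Q be a positive definite Hermitian M×M complex matrix, a ∈ ℂ^M nonzero, γ > 0, and M = γ a aᴴ + Q. Then M⁻¹ a / (aᴴ M⁻¹ a) = Q⁻¹ a / (aᴴ Q⁻¹ a), i.e., the Capon beamformer weight computed from the full array covariance matrix equals the one computed from the interference-plus-noise covariance matrix. -/
open Matrix ComplexOrder

lemma vecMulVec_mulVec' {n : Type*} [Fintype n] (a b x : n → ℂ) :
    (vecMulVec a b) *ᵥ x = (b ⬝ᵥ x) • a := by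
  funext i
  simp only [vecMulVec_apply, mulVec, dotProduct, Pi.smul_apply, smul_eq_mul,
    Finset.sum_mul, Finset.mul_sum]
  exact Finset.sum_congr rfl fun j _ => by ring

/-- The Capon beamformer weight computed from the full array covariance matrix
equals the one computed from the interference-plus-noise covariance matrix. -/
theorem capon_weight_eq
    (M₀ : ℕ) (Q : Matrix (Fin M₀) (Fin M₀) ℂ) (hQ : Q.PosDef)
    (a : Fin M₀ → ℂ) (ha : a ≠ 0) (γ : ℝ) (hγ : 0 < γ)
    (A : Matrix (Fin M₀) (Fin M₀) ℂ)
    (hA : A = (γ : ℂ) • vecMulVec a (star a) + Q) :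
    (star a ⬝ᵥ A⁻¹.mulVec a)⁻¹ • A⁻¹.mulVec a
      = (star a ⬝ᵥ Q⁻¹.mulVec a)⁻¹ • Q⁻¹.mulVec a := by
  classical
  have hQinv : (Q⁻¹).PosDef := hQ.inv
  set s : ℂ := star a ⬝ᵥ Q⁻¹ *ᵥ a with hs_def
  have hs : 0 < s := hQinv.dotProduct_mulVec_pos ha
  have hγc : (0:ℂ) < (γ:ℂ) := by exact_mod_cast hγ
  have hc : (0:ℂ) < 1 + (γ:ℂ) * s :=
    lt_of_lt_of_le one_pos (le_add_of_nonneg_right (mul_pos hγc hs).le)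
  have hc0 : (1 + (γ:ℂ) * s) ≠ 0 := hc.ne'
  -- positive semidefiniteness of the rank-one part
  have hPSD : ((γ:ℂ) • vecMulVec a (star a)).PosSemidef := by
    refine posSemidef_iff_dotProduct_mulVec.2 ⟨?_, ?_⟩
    · show ((γ:ℂ) • vecMulVec a (star a))ᴴ = _
      rw [conjTranspose_smul]
      congr 1
      · simp
      · funext i j
        simp [vecMulVec_apply, conjTranspose_apply, mul_comm]
    · intro x
      rw [smul_mulVec, dotProduct_smul, vecMulVec_mulVec', dotProduct_smul,
        smul_eq_mul, smul_eq_mul]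
      have h1 : star a ⬝ᵥ x = star (star x ⬝ᵥ a) := by
        simp [dotProduct, mul_comm]
      rw [h1]
      exact mul_nonneg hγc.le (star_mul_self_nonneg _)
  have hAPD : A.PosDef := hA ▸ Matrix.PosDef.posSemidef_add hPSD hQ
  have hdQ : IsUnit Q.det := (isUnit_iff_isUnit_det _).1 hQ.isUnit
  have hdA : IsUnit A.det := (isUnit_iff_isUnit_det _).1 hAPD.isUnit
  -- key identity
  have key : A *ᵥ (Q⁻¹ *ᵥ a) = (1 + (γ:ℂ) * s) • a := by
    rw [hA, add_mulVec, smul_mulVec, vecMulVec_mulVec', mulVec_mulVec,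
      mul_nonsing_inv Q hdQ, one_mulVec, ← hs_def, add_smul, one_smul, smul_smul]
    rw [add_comm]
  have key2 : A⁻¹ *ᵥ a = (1 + (γ:ℂ) * s)⁻¹ • (Q⁻¹ *ᵥ a) := by
    have := congrArg (fun v => A⁻¹ *ᵥ v) key
    simp only [mulVec_mulVec, ← Matrix.mul_assoc, nonsing_inv_mul A hdA, Matrix.one_mul, mulVec_smul] at this
    rw [this, smul_smul, inv_mul_cancel₀ hc0, one_smul]
  rw [show A⁻¹.mulVec a = A⁻¹ *ᵥ a from rfl, key2, dotProduct_smul, smul_eq_mul, ← hs_def,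
    mul_inv, inv_inv, smul_smul]
  congr 1
  field_simp
end

section
/- Let Q be a positive definite Hermitian M×M complex matrix, a ∈ ℂ^M nonzero, γ > 0, and M = γ a aᴴ + Q. Then 1 / (aᴴ M⁻¹ a) = γ + 1 / (aᴴ Q⁻¹ a). In particular the Capon output power γ_Cap = (aᴴ M⁻¹ a)⁻¹ exceeds the true signal power γ by exactly (aᴴ Q⁻¹ a)⁻¹ > 0. -/
open Matrix ComplexOrder

/-- The Capon output power exceeds the true signal power γ by exactly
`(aᴴ Q⁻¹ a)⁻¹`. -/
theorem capon_power_bias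
    (M₀ : ℕ) (Q : Matrix (Fin M₀) (Fin M₀) ℂ) (hQ : Q.PosDef)
    (a : Fin M₀ → ℂ) (ha : a ≠ 0) (γ : ℝ) (hγ : 0 < γ)
    (A : Matrix (Fin M₀) (Fin M₀) ℂ)
    (hA : A = (γ : ℂ) • vecMulVec a (star a) + Q) :
    (star a ⬝ᵥ A⁻¹.mulVec a)⁻¹ = (γ : ℂ) + (star a ⬝ᵥ Q⁻¹.mulVec a)⁻¹
      ∧ 0 < (star a ⬝ᵥ Q⁻¹.mulVec a).re := by
  set s : ℂ := star a ⬝ᵥ Q⁻¹.mulVec a with hs_def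
  have hQinv : (Q⁻¹).PosDef := hQ.inv
  have hs : (0 : ℂ) < s := hQinv.dotProduct_mulVec_pos ha
  obtain ⟨hsre, hsim⟩ : 0 < s.re ∧ s.im = 0 := by
    rw [Complex.lt_def] at hs
    exact ⟨by simpa using hs.1, by simpa using hs.2.symm⟩
  have hsne : s ≠ 0 := ne_of_gt hs
  -- positive semidefiniteness of the rank-one part
  have hvm : ∀ v : Fin M₀ → ℂ, vecMulVec a (star a) *ᵥ v = (star a ⬝ᵥ v) • a := by
    intro v
    ext i
    simp [vecMulVec, mulVec, dotProduct, Finset.mul_sum, mul_comm, mul_left_comm]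
  have hpsd : ((γ : ℂ) • vecMulVec a (star a)).PosSemidef := by
    rw [posSemidef_iff_dotProduct_mulVec]
    constructor
    · ext i j
      simp [conjTranspose_apply, vecMulVec, mul_comm, Complex.ext_iff]
    · intro x
      rw [smul_mulVec, dotProduct_smul, hvm, dotProduct_smul, smul_eq_mul, smul_eq_mul]
      have h1 : star x ⬝ᵥ a = star (star a ⬝ᵥ x) := by
        simp [dotProduct, mul_comm]
      exact mul_nonneg (by positivity) (by rw [h1]; exact mul_star_self_nonneg _)
  have hApd : A.PosDef := by
    rw [hA]
    exact Matrix.PosDef.posSemidef_add hpsd hQ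
  have hQdet : IsUnit Q.det := isUnit_iff_isUnit_det _ |>.1 hQ.isUnit
  have hAdet : IsUnit A.det := isUnit_iff_isUnit_det _ |>.1 hApd.isUnit
  set c : ℂ := 1 + (γ : ℂ) * s with hc_def
  have hcre : 0 < c.re := by
    simp only [hc_def, Complex.add_re, Complex.one_re, Complex.mul_re, Complex.ofReal_re,
      Complex.ofReal_im, hsim]
    nlinarith
  have hcne : c ≠ 0 := by
    intro h
    rw [h] at hcre
    simp at hcre
  -- key mulVec computation
  have hAv : A *ᵥ (Q⁻¹ *ᵥ a) = c • a := by
    rw [hA, add_mulVec, smul_mulVec, hvm, mulVec_mulVec,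
      Matrix.mul_nonsing_inv Q hQdet, one_mulVec]
    rw [← hs_def]
    ext i
    simp [hc_def]
    ring
  have hAinv : A⁻¹ *ᵥ a = c⁻¹ • (Q⁻¹ *ᵥ a) := by
    have : a = A *ᵥ (c⁻¹ • (Q⁻¹ *ᵥ a)) := by
      rw [mulVec_smul, hAv, smul_smul, inv_mul_cancel₀ hcne, one_smul]
    calc A⁻¹ *ᵥ a = A⁻¹ *ᵥ (A *ᵥ (c⁻¹ • (Q⁻¹ *ᵥ a))) := by rw [← this]
    _ = c⁻¹ • (Q⁻¹ *ᵥ a) := by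
        rw [mulVec_mulVec, Matrix.nonsing_inv_mul A hAdet, one_mulVec]
  have hkey : star a ⬝ᵥ A⁻¹.mulVec a = c⁻¹ * s := by
    rw [show A⁻¹.mulVec a = A⁻¹ *ᵥ a from rfl, hAinv, dotProduct_smul, smul_eq_mul, hs_def]
  refine ⟨?_, hsre⟩
  rw [hkey]
  field_simp [hc_def]
  ring
end

section
/- Let M = γ a aᴴ + Q with Q positive definite Hermitian, a ≠ 0, γ > 0, and let w = Q⁻¹a/(aᴴQ⁻¹a) be the Capon weight. Then the Capon output power wᴴ M w equals 1/(aᴴ M⁻¹ a). -/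
open Matrix ComplexOrder

/-- The Capon output power `wᴴ M w` of the Capon weight `w = Q⁻¹a/(aᴴQ⁻¹a)`
equals `1/(aᴴ M⁻¹ a)`. -/
theorem capon_output_power
    (M₀ : ℕ) (Q : Matrix (Fin M₀) (Fin M₀) ℂ) (hQ : Q.PosDef)
    (a : Fin M₀ → ℂ) (ha : a ≠ 0) (γ : ℝ) (hγ : 0 < γ)
    (A : Matrix (Fin M₀) (Fin M₀) ℂ)
    (hA : A = (γ : ℂ) • vecMulVec a (star a) + Q)
    (w : Fin M₀ → ℂ)
    (hw : w = (star a ⬝ᵥ Q⁻¹.mulVec a)⁻¹ • Q⁻¹.mulVec a) :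
    star w ⬝ᵥ A.mulVec w = (star a ⬝ᵥ A⁻¹.mulVec a)⁻¹ := by
  have hQinv : Q⁻¹.PosDef := hQ.inv
  set x : Fin M₀ → ℂ := Q⁻¹ *ᵥ a with hx
  set s : ℂ := star a ⬝ᵥ x with hsdef
  have hs_pos : 0 < s := hQinv.dotProduct_mulVec_pos ha
  have hs_im : s.im = 0 := by
    have := Complex.lt_def.mp hs_pos
    simpa using this.2.symm
  have hs_re : 0 < s.re := (Complex.lt_def.mp hs_pos).1
  have hs_ne : s ≠ 0 := ne_of_gt hs_pos
  have hs_star : star s = s := Complex.ext (by simp) (by simp [hs_im])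
  set c : ℂ := 1 + γ * s with hcdef
  have hc_ne : c ≠ 0 := by
    intro h
    have : c.re = 0 := by rw [h]; simp
    have hcre : c.re = 1 + γ * s.re := by simp [hcdef]
    nlinarith
  -- A is positive definite
  have hvv : ((γ : ℂ) • vecMulVec a (star a)).PosSemidef := by
    rw [posSemidef_iff_dotProduct_mulVec]
    constructor
    · unfold Matrix.IsHermitian
      rw [conjTranspose_smul]
      congr 1
      · simp
      · ext i j
        simp [vecMulVec_apply, conjTranspose_apply, mul_comm]
    · intro y
      rw [smul_mulVec, dotProduct_smul, vecMulVec_mulVec', dotProduct_smul]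
      have h1 : star y ⬝ᵥ a = star (star a ⬝ᵥ y) := star_dotProduct y a
      rw [smul_eq_mul, smul_eq_mul, h1]
      exact mul_nonneg (by positivity) (mul_star_self_nonneg _)
  have hApd : A.PosDef := hA ▸ Matrix.PosDef.posSemidef_add hvv hQ
  have hQu : IsUnit Q.det := (Matrix.isUnit_iff_isUnit_det Q).mp hQ.isUnit
  have hAu : IsUnit A.det := (Matrix.isUnit_iff_isUnit_det A).mp hApd.isUnit
  -- A *ᵥ x = c • a
  have hAx : A *ᵥ x = c • a := by
    rw [hA, add_mulVec, smul_mulVec, vecMulVec_mulVec', hx, mulVec_mulVec,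
      mul_nonsing_inv _ hQu, one_mulVec]
    rw [← hx, ← hsdef]
    funext i
    simp [hcdef]
    ring
  -- A⁻¹ *ᵥ a = c⁻¹ • x
  have hAinv : A⁻¹ *ᵥ a = c⁻¹ • x := by
    have : a = c⁻¹ • (A *ᵥ x) := by rw [hAx, smul_smul, inv_mul_cancel₀ hc_ne, one_smul]
    rw [this, mulVec_smul, mulVec_mulVec, nonsing_inv_mul _ hAu, one_mulVec]
  -- star x ⬝ᵥ a = s
  have hxa : star x ⬝ᵥ a = s := by
    rw [star_dotProduct x a, ← hsdef, hs_star]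
  -- compute both sides
  have hAw : A *ᵥ w = (s⁻¹ * c) • a := by
    rw [hw, mulVec_smul, hAx, smul_smul]
  rw [hAw, hw, star_smul, smul_dotProduct, dotProduct_smul, hxa,
    hAinv, dotProduct_smul]
  rw [star_inv₀, hs_star]
  field_simp
  rw [← hsdef]
  simp only [smul_eq_mul]
  field_simp
end

section
/- Let Q be positive definite Hermitian and a ∈ ℂ^M nonzero. Among all w ∈ ℂ^M with wᴴ a = 1, the quadratic form wᴴ Q w is minimized uniquely by w = Q⁻¹a/(aᴴQ⁻¹a), and the minimum value is 1/(aᴴ Q⁻¹ a). -/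
open Matrix ComplexOrder

/-- MVDR/Capon optimization: among all `w` with `wᴴ a = 1`, the quadratic form
`wᴴ Q w` is minimized uniquely by `w₀ = Q⁻¹a/(aᴴQ⁻¹a)`, with minimum value
`1/(aᴴ Q⁻¹ a)`. -/
theorem mvdr_optimality
    (M₀ : ℕ) (Q : Matrix (Fin M₀) (Fin M₀) ℂ) (hQ : Q.PosDef)
    (a : Fin M₀ → ℂ) (ha : a ≠ 0)
    (w₀ : Fin M₀ → ℂ)
    (hw₀ : w₀ = (star a ⬝ᵥ Q⁻¹.mulVec a)⁻¹ • Q⁻¹.mulVec a) :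
    star w₀ ⬝ᵥ a = 1
      ∧ star w₀ ⬝ᵥ Q.mulVec w₀ = (star a ⬝ᵥ Q⁻¹.mulVec a)⁻¹
      ∧ (∀ w : Fin M₀ → ℂ, star w ⬝ᵥ a = 1 →
          (star w₀ ⬝ᵥ Q.mulVec w₀).re ≤ (star w ⬝ᵥ Q.mulVec w).re)
      ∧ (∀ w : Fin M₀ → ℂ, star w ⬝ᵥ a = 1 →
          (star w ⬝ᵥ Q.mulVec w).re = (star w₀ ⬝ᵥ Q.mulVec w₀).re → w = w₀) := by
  have hdet : IsUnit Q.det := hQ.det_pos.ne'.isUnit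
  set c : ℂ := star a ⬝ᵥ Q⁻¹.mulVec a with hc_def
  have hcpos : 0 < c := hQ.inv.dotProduct_mulVec_pos ha
  have hc0 : c ≠ 0 := ne_of_gt hcpos
  have hcim : c.im = 0 := by
    have := Complex.lt_def.mp hcpos
    simpa using this.2.symm
  have hcconj : (starRingEnd ℂ) c = c := Complex.conj_eq_iff_im.mpr hcim
  -- key identity: star (Q⁻¹ *ᵥ a) ⬝ᵥ (Q *ᵥ x) = star a ⬝ᵥ x
  have keyA : ∀ x : Fin M₀ → ℂ, star (Q⁻¹.mulVec a) ⬝ᵥ Q.mulVec x = star a ⬝ᵥ x := by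
    intro x
    rw [star_mulVec, hQ.1.inv, dotProduct_mulVec, vecMul_vecMul,
      Matrix.nonsing_inv_mul Q hdet, vecMul_one]
  -- Q *ᵥ w₀ = c⁻¹ • a
  have hQw₀ : Q.mulVec w₀ = c⁻¹ • a := by
    rw [hw₀, mulVec_smul, mulVec_mulVec, Matrix.mul_nonsing_inv Q hdet, one_mulVec]
  -- star (Q⁻¹ *ᵥ a) ⬝ᵥ a = conj c = c
  have hsc : star (Q⁻¹.mulVec a) ⬝ᵥ a = c := by
    have := keyA (Q⁻¹.mulVec a)
    rwa [mulVec_mulVec, Matrix.mul_nonsing_inv Q hdet, one_mulVec, ← hc_def] at this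
  have h1 : star w₀ ⬝ᵥ a = 1 := by
    rw [hw₀, star_smul, smul_dotProduct, hsc, smul_eq_mul, star_inv₀]
    simp only [RCLike.star_def, hcconj]
    exact inv_mul_cancel₀ hc0
  have h2 : star w₀ ⬝ᵥ Q.mulVec w₀ = c⁻¹ := by
    rw [hQw₀, dotProduct_smul, hw₀, star_smul, smul_dotProduct, hsc, smul_eq_mul,
      smul_eq_mul, star_inv₀]
    simp only [RCLike.star_def, hcconj]
    field_simp
  -- expansion: for any w with star w ⬝ᵥ a = 1,
  -- star w ⬝ᵥ Q w = c⁻¹ + star (w - w₀) ⬝ᵥ Q (w - w₀)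
  have hexp : ∀ w : Fin M₀ → ℂ, star w ⬝ᵥ a = 1 →
      star w ⬝ᵥ Q.mulVec w = c⁻¹ + star (w - w₀) ⬝ᵥ Q.mulVec (w - w₀) := by
    intro w hw
    have hda : star (w - w₀) ⬝ᵥ a = 0 := by
      rw [star_sub, sub_dotProduct, hw, h1, sub_self]
    have had : star a ⬝ᵥ (w - w₀) = 0 := by
      rw [star_dotProduct, hda, star_zero]
    have cross1 : star w₀ ⬝ᵥ Q.mulVec (w - w₀) = 0 := by
      rw [hw₀, star_smul, smul_dotProduct, keyA, ← hw₀, had, smul_zero]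
    have cross2 : star (w - w₀) ⬝ᵥ Q.mulVec w₀ = 0 := by
      rw [hQw₀, dotProduct_smul, hda, smul_zero]
    calc star w ⬝ᵥ Q.mulVec w
        = star (w₀ + (w - w₀)) ⬝ᵥ Q.mulVec (w₀ + (w - w₀)) := by ring_nf
      _ = star w₀ ⬝ᵥ Q.mulVec w₀ + star w₀ ⬝ᵥ Q.mulVec (w - w₀)
          + (star (w - w₀) ⬝ᵥ Q.mulVec w₀ + star (w - w₀) ⬝ᵥ Q.mulVec (w - w₀)) := by
          rw [star_add, add_dotProduct, mulVec_add, dotProduct_add, dotProduct_add]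
      _ = c⁻¹ + star (w - w₀) ⬝ᵥ Q.mulVec (w - w₀) := by
          rw [h2, cross1, cross2]; ring
  refine ⟨h1, by rw [h2, hc_def], ?_, ?_⟩
  · intro w hw
    rw [hexp w hw, h2]
    have hnn : 0 ≤ star (w - w₀) ⬝ᵥ Q.mulVec (w - w₀) := hQ.posSemidef.dotProduct_mulVec_nonneg (w - w₀)
    have := (Complex.le_def.mp hnn).1
    simp only [Complex.add_re]
    simpa using this
  · intro w hw heq
    rw [hexp w hw, h2] at heq
    have hnn : 0 ≤ star (w - w₀) ⬝ᵥ Q.mulVec (w - w₀) := hQ.posSemidef.dotProduct_mulVec_nonneg (w - w₀)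
    have hre0 : (star (w - w₀) ⬝ᵥ Q.mulVec (w - w₀)).re = 0 := by
      have := heq
      simp only [Complex.add_re] at this
      linarith
    have him0 : (star (w - w₀) ⬝ᵥ Q.mulVec (w - w₀)).im = 0 := by
      have := (Complex.le_def.mp hnn).2
      simpa using this.symm
    have hzero : star (w - w₀) ⬝ᵥ Q.mulVec (w - w₀) = 0 := Complex.ext hre0 him0
    by_contra hne
    have hd : w - w₀ ≠ 0 := sub_ne_zero.mpr hne
    exact (hQ.dotProduct_mulVec_pos hd).ne' hzero
end
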